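/- (Carlitz) Let q = 2^r with r a positive integer, and let a ∈ 𝔽_q^*. Then K₂(λ;a) = K(λ;a)² − q. -/

import Mathlib

open Finset Matrix

/-- The quadratic form `θ⁺(x) = ∑ i, x_i x_{n+i}` on `F^{2n}` (columns indexed by `Fin n ⊕ Fin n`). -/
def thetaPlus (F : Type) [Field F] (n : ℕ) (x : Fin n ⊕ Fin n → F) : F :=
  ∑ i : Fin n, x (Sum.inl i) * x (Sum.inr i)

/-- The orthogonal group `O⁺(2n,q)`: invertible matrices preserving `θ⁺`. -/
noncomputable def OplusGrp (F : Type) [Field F] [Fintype F] [DecidableEq F] (n : ℕ) :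
    Finset (Matrix (Fin n ⊕ Fin n) (Fin n ⊕ Fin n) F) := by
  classical
  exact Finset.univ.filter (fun w => IsUnit w ∧
    ∀ x : Fin n ⊕ Fin n → F, thetaPlus F n (w.mulVec x) = thetaPlus F n x)

/-- `SO⁺(2n,q)`: the kernel of `δ⁺(w) = Tr(B ᵗC)` on `O⁺(2n,q)`,
where `w = [[A,B],[C,D]]` in `n × n` blocks. -/
noncomputable def SOplusGrp (F : Type) [Field F] [Fintype F] [DecidableEq F] (n : ℕ) :
    Finset (Matrix (Fin n ⊕ Fin n) (Fin n ⊕ Fin n) F) := by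
  classical
  exact (OplusGrp F n).filter
    (fun w => Matrix.trace (Matrix.toBlocks₁₂ w * (Matrix.toBlocks₂₁ w)ᵀ) = 0)

/-- The trace map `tr(x) = x + x² + ⋯ + x^{2^{r−1}}`, valued in `𝔽₂ = {0,1} ⊆ F`. -/
def trF (F : Type) [Field F] (r : ℕ) (x : F) : F := ∑ i ∈ Finset.range r, x ^ 2 ^ i

/-- The canonical additive character `λ(x) = (−1)^{tr(x)} ∈ {±1} ⊆ ℤ`. -/
noncomputable def lam (F : Type) [Field F] (r : ℕ) (x : F) : ℤ := by
  classical exact if trF F r x = 0 then 1 else -1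

/-- The trace map `tr` viewed as a function into `𝔽₂ = ZMod 2`. -/
noncomputable def tr2 (F : Type) [Field F] (r : ℕ) (x : F) : ZMod 2 := by
  classical exact if trF F r x = 0 then 0 else 1

/-- The Kloosterman sum `K(λ;a) = ∑_{α ∈ F*} λ(α + aα⁻¹)`. -/
noncomputable def Kl (F : Type) [Field F] [Fintype F] (r : ℕ) (a : F) : ℤ := by
  classical
  exact ∑ α ∈ Finset.univ.filter (fun α : F => α ≠ 0), lam F r (α + a * α⁻¹)

/-- The `m`-dimensional Kloosterman sum
`K_m(λ;a) = ∑_{α₁,…,α_m ∈ F*} λ(α₁ + ⋯ + α_m + aα₁⁻¹⋯α_m⁻¹)`;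
for `m = 0` this is `K₀(λ;a) = λ(a)`. -/
noncomputable def Klm (F : Type) [Field F] [Fintype F] (r m : ℕ) (a : F) : ℤ := by
  classical
  exact ∑ v ∈ Finset.univ.filter (fun v : Fin m → F => ∀ i, v i ≠ 0),
    lam F r ((∑ i, v i) + a * (∏ i, v i)⁻¹)

/-- The power moment `MK^h = ∑_{a ∈ F*} K(λ;a)^h`. -/
noncomputable def MK (F : Type) [Field F] [Fintype F] (r h : ℕ) : ℤ := by
  classical exact ∑ a ∈ Finset.univ.filter (fun a : F => a ≠ 0), (Kl F r a) ^ h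

/-- The power moment `MK₂^h = ∑_{a ∈ F*} K₂(λ;a)^h` of 2-dimensional Kloosterman sums. -/
noncomputable def MK2 (F : Type) [Field F] [Fintype F] (r h : ℕ) : ℤ := by
  classical exact ∑ a ∈ Finset.univ.filter (fun a : F => a ≠ 0), (Klm F r 2 a) ^ h

/-- The binary code `C(G) = {u ∈ 𝔽₂^G : ∑_{g ∈ G} u_g Tr(g) = 0 in F}`. -/
noncomputable def code (F : Type) [Field F] [Fintype F] [DecidableEq F]
    {ι : Type} [Fintype ι] [DecidableEq ι] (G : Finset (Matrix ι ι F)) :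
    Finset (↥G → ZMod 2) := by
  classical
  exact Finset.univ.filter
    (fun u => ∑ g : ↥G, (u g).val • Matrix.trace (g : Matrix ι ι F) = 0)

/-- Number of codewords of Hamming weight `j` in the code `C(G)`. -/
noncomputable def wtCount (F : Type) [Field F] [Fintype F] [DecidableEq F]
    {ι : Type} [Fintype ι] [DecidableEq ι] (G : Finset (Matrix ι ι F)) (j : ℕ) : ℕ := by
  classical
  exact ((code F G).filter
    (fun u => (Finset.univ.filter (fun g : ↥G => u g = 1)).card = j)).card

/-- `t! · S(h,t)` where `S(h,t)` is the Stirling number of the second kind,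
`S(h,t) = (1/t!) ∑_{j=0}^{t} (−1)^{t−j} C(t,j) j^h`. -/
def tS (h t : ℕ) : ℤ :=
  ∑ j ∈ Finset.range (t + 1), (-1 : ℤ) ^ (t - j) * (t.choose j : ℤ) * (j : ℤ) ^ h

/-- Binomial coefficient with integer arguments: `0` whenever `k < 0` or `k > n`. -/
def ichoose (n k : ℤ) : ℤ := if 0 ≤ k ∧ k ≤ n then (n.toNat.choose k.toNat : ℤ) else 0


/-! Substituting `y ↦ xy` and then `x ↦ x / (1 + y)` in
`K(a)² = ∑_{x,y} λ(x + a/x) λ(y + a/y)` gives `K(a)² = (q - 1) + ∑_{y ≠ 0, 1} K(a(y + y⁻¹))`.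
In characteristic 2 the equation `y + y⁻¹ = s` becomes, with `y = sz`, the Artin–Schreier
equation `z² + z = s⁻²`, which has `1 + λ(s⁻¹)` solutions. So
`K(a)² = q - 1 + ∑_s K(as) + ∑_s λ(s⁻¹) K(as)`; the first sum is `1`, and the second is
`K₂(a)`, as one sees by summing out `α₁` in `K₂(a)` with `α₂ = s⁻¹` fixed. -/

open scoped Classical

section

variable {F : Type} [Field F] {r : ℕ}

theorem lam_zero : lam F r 0 = 1 := by
  simp [lam, trF]

variable [Fintype F]

theorem charP_two_of_card_eq_two_pow (hF : Fintype.card F = 2 ^ r) : CharP F 2 := by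
  rw [CharP.charP_iff_prime_eq_zero Nat.prime_two]
  have h := FiniteField.cast_card_eq_zero F
  rw [hF, Nat.cast_pow, Nat.cast_ofNat] at h
  exact (pow_eq_zero_iff'.mp h).1

theorem one_le_of_card_eq_two_pow (hF : Fintype.card F = 2 ^ r) : 1 ≤ r := by
  have h := Fintype.one_lt_card (α := F)
  rw [hF] at h
  exact Nat.one_le_iff_ne_zero.mpr (by rintro rfl; simp at h)

theorem trF_add (hF : Fintype.card F = 2 ^ r) (x y : F) :
    trF F r (x + y) = trF F r x + trF F r y := by
  have := charP_two_of_card_eq_two_pow hF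
  have : Fact (Nat.Prime 2) := ⟨Nat.prime_two⟩
  simp only [trF, ← sum_add_distrib, add_pow_char_pow]

theorem trF_sq (hF : Fintype.card F = 2 ^ r) (x : F) : trF F r (x ^ 2) = trF F r x := by
  have hx : x ^ 2 ^ r = x := by rw [← hF, FiniteField.pow_card]
  have h := sum_range_succ' (fun i => x ^ 2 ^ i) r
  rw [sum_range_succ, hx, pow_zero, pow_one, add_left_inj] at h
  simp only [trF, ← pow_mul, ← pow_succ']
  exact h.symm

theorem trF_eq_zero_or_one (hF : Fintype.card F = 2 ^ r) (x : F) :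
    trF F r x = 0 ∨ trF F r x = 1 := by
  have := charP_two_of_card_eq_two_pow hF
  have hsq : trF F r x ^ 2 = trF F r (x ^ 2) := by
    simp only [trF, sum_pow_char, ← pow_mul, mul_comm]
  have : trF F r x * (trF F r x - 1) = 0 := by linear_combination hsq + trF_sq hF x
  rcases mul_eq_zero.mp this with h | h
  · exact Or.inl h
  · exact Or.inr (sub_eq_zero.mp h)

open Polynomial in
theorem exists_trF_ne_zero (hF : Fintype.card F = 2 ^ r) : ∃ b : F, trF F r b ≠ 0 := by
  have hr := one_le_of_card_eq_two_pow hF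
  by_contra! h
  let P : F[X] := ∑ i ∈ range r, X ^ 2 ^ i
  have hdeg : P.natDegree < Fintype.card F := by
    rw [hF]
    refine (natDegree_sum_le_of_forall_le _ _ (n := 2 ^ (r - 1)) fun i hi => ?_).trans_lt
      (Nat.pow_lt_pow_right one_lt_two (by omega))
    rw [natDegree_X_pow]
    exact Nat.pow_le_pow_right two_pos (by have := mem_range.mp hi; omega)
  have hP : P = 0 := eq_zero_of_natDegree_lt_card_of_eval_eq_zero P Function.injective_id
    (fun x => by simpa [P, eval_finsetSum, trF] using h x) hdeg
  have hcoeff : P.coeff 1 = 1 := by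
    rw [finsetSum_coeff, sum_eq_single_of_mem 0 (mem_range.mpr hr)]
    · simp
    · intro i _ hi
      rw [coeff_X_pow, if_neg (Nat.one_lt_two_pow hi).ne]
  simp [hP] at hcoeff

theorem lam_add (hF : Fintype.card F = 2 ^ r) (x y : F) :
    lam F r (x + y) = lam F r x * lam F r y := by
  have := charP_two_of_card_eq_two_pow hF
  simp only [lam, trF_add hF]
  rcases trF_eq_zero_or_one hF x with hx | hx <;> rcases trF_eq_zero_or_one hF y with hy | hy <;>
    simp [hx, hy, CharTwo.add_self_eq_zero]

theorem lam_sq (hF : Fintype.card F = 2 ^ r) (x : F) : lam F r (x ^ 2) = lam F r x := by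
  simp only [lam, trF_sq hF]

noncomputable def lamChar (hF : Fintype.card F = 2 ^ r) : AddChar F ℤ where
  toFun := lam F r
  map_zero_eq_one' := lam_zero
  map_add_eq_mul' := lam_add hF

theorem sum_lam (hF : Fintype.card F = 2 ^ r) : ∑ x, lam F r x = 0 := by
  refine AddChar.sum_eq_zero_of_ne_one (ψ := lamChar hF) fun h => ?_
  obtain ⟨b, hb⟩ := exists_trF_ne_zero hF
  have := DFunLike.congr_fun h b
  simp [lamChar, lam, hb] at this

theorem sum_filter_ne_zero_eq_sub {M : Type*} [AddCommGroup M] (f : F → M) :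
    ∑ x ∈ univ.filter (· ≠ 0), f x = ∑ x, f x - f 0 := by
  rw [filter_ne', sum_erase_eq_sub (mem_univ 0)]

theorem sum_filter_ne_zero_comp_mul {M : Type*} [AddCommMonoid M] (f : F → M) {c : F}
    (hc : c ≠ 0) :
    ∑ x ∈ univ.filter (· ≠ 0), f (c * x) = ∑ x ∈ univ.filter (· ≠ 0), f x :=
  sum_equiv (Equiv.mulLeft₀ c hc) (by simp [hc]) fun _ _ => rfl

theorem sum_filter_ne_zero_lam (hF : Fintype.card F = 2 ^ r) :
    ∑ x ∈ univ.filter (· ≠ 0), lam F r x = -1 := by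
  rw [sum_filter_ne_zero_eq_sub, sum_lam hF, lam_zero]
  rfl

theorem sum_filter_ne_zero_lam_mul (hF : Fintype.card F = 2 ^ r) {c : F} (hc : c ≠ 0) :
    ∑ x ∈ univ.filter (· ≠ 0), lam F r (c * x) = -1 := by
  rw [sum_filter_ne_zero_comp_mul _ hc, sum_filter_ne_zero_lam hF]

theorem card_sq_add_self_le (hF : Fintype.card F = 2 ^ r) (c : F) :
    (#({z | z ^ 2 + z = c} : Finset F) : ℤ) ≤ 1 + lam F r c := by
  have := charP_two_of_card_eq_two_pow hF
  have h2 : (2 : F) = 0 := CharTwo.two_eq_zero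
  by_cases htr : trF F r c = 0
  · rw [show lam F r c = 1 from if_pos htr]
    obtain hempty | ⟨z, hz⟩ := (univ.filter fun z : F => z ^ 2 + z = c).eq_empty_or_nonempty
    · simp [hempty]
    have hsub : ({w | w ^ 2 + w = c} : Finset F) ⊆ {z, z + 1} := by
      intro w hw
      simp only [mem_filter, mem_univ, true_and] at hw hz
      have : (w + z) * (w + z + 1) = 0 := by linear_combination hw + hz + (c + w * z) * h2
      rcases mul_eq_zero.mp this with h | h
      · simp [show w = z by linear_combination h - z * h2]
      · simp [show w = z + 1 by linear_combination h - (z + 1) * h2]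
    push_cast
    exact_mod_cast (card_le_card hsub).trans card_le_two
  · rw [show lam F r c = -1 from if_neg htr, filter_eq_empty_iff.mpr]
    · simp
    rintro z - rfl
    exact htr (by rw [trF_add hF, trF_sq hF, CharTwo.add_self_eq_zero])

-- Both sides sum to `q` over `c`, and `card_sq_add_self_le` bounds each term.
theorem card_sq_add_self (hF : Fintype.card F = 2 ^ r) (c : F) :
    (#({z | z ^ 2 + z = c} : Finset F) : ℤ) = 1 + lam F r c := by
  have hsum : ∑ d : F, (#({z | z ^ 2 + z = d} : Finset F) : ℤ) = ∑ d : F, (1 + lam F r d) := by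
    rw [sum_add_distrib, sum_lam hF, ← Nat.cast_sum,
      ← card_eq_sum_card_fiberwise (f := fun z : F => z ^ 2 + z) (s := univ) (t := univ)
        fun _ _ => mem_coe.mpr (mem_univ _)]
    simp
  exact (sum_eq_sum_iff_of_le fun d _ => card_sq_add_self_le hF d).mp hsum c (mem_univ c)

theorem card_add_inv_eq (hF : Fintype.card F = 2 ^ r) {s : F} (hs : s ≠ 0) :
    (#{y ∈ (univ.filter (· ≠ (0 : F))).erase 1 | y + y⁻¹ = s} : ℤ) = 1 + lam F r s⁻¹ := by
  have := charP_two_of_card_eq_two_pow hF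
  have h2 : (2 : F) = 0 := CharTwo.two_eq_zero
  rw [← lam_sq hF, ← card_sq_add_self hF, card_equiv (Equiv.mulRight₀ s⁻¹ (inv_ne_zero hs))]
  intro y
  simp only [mem_filter, mem_erase, mem_univ, true_and, Equiv.mulRight₀_apply]
  constructor
  · rintro ⟨⟨-, hy0⟩, hys⟩
    have hq : y ^ 2 + s * y + 1 = 0 := by
      rw [← hys]; field_simp; linear_combination (y ^ 2 + 1) * h2
    field_simp
    linear_combination hq - h2
  · intro hz
    have hq : y ^ 2 + s * y + 1 = 0 := by
      field_simp at hz
      linear_combination hz + h2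
    have hy0 : y ≠ 0 := by rintro rfl; simp at hq
    refine ⟨⟨fun hy1 => hs ?_, hy0⟩, ?_⟩
    · subst hy1; linear_combination hq - h2
    · field_simp; linear_combination hq - s * y * h2

theorem add_inv_ne_zero_of_ne_one (hF : Fintype.card F = 2 ^ r) {y : F} (hy0 : y ≠ 0)
    (hy1 : y ≠ 1) : y + y⁻¹ ≠ 0 := by
  have := charP_two_of_card_eq_two_pow hF
  have h2 : (2 : F) = 0 := CharTwo.two_eq_zero
  intro h
  field_simp at h
  have : (y - 1) ^ 2 = 0 := by linear_combination h - y * h2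
  exact hy1 (sub_eq_zero.mp (pow_eq_zero_iff two_ne_zero |>.mp this))

theorem sum_comp_add_inv (hF : Fintype.card F = 2 ^ r) (f : F → ℤ) :
    ∑ y ∈ (univ.filter (· ≠ (0 : F))).erase 1, f (y + y⁻¹) =
      ∑ s ∈ univ.filter (· ≠ 0), (1 + lam F r s⁻¹) * f s := by
  have hmaps : ∀ y ∈ (univ.filter (· ≠ (0 : F))).erase 1, y + y⁻¹ ∈ univ.filter (· ≠ 0) := by
    intro y hy
    simp only [mem_filter, mem_erase, mem_univ, true_and] at hy ⊢
    exact add_inv_ne_zero_of_ne_one hF hy.2 hy.1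
  rw [← sum_fiberwise_of_maps_to hmaps]
  refine sum_congr rfl fun s hs => ?_
  rw [sum_congr rfl fun y hy => congrArg f (mem_filter.mp hy).2, sum_const, nsmul_eq_mul,
    card_add_inv_eq hF (mem_filter.mp hs).2]

theorem kl_sq_mul_eq_sum {c : F} (hc : c ≠ 0) (d : F) :
    Kl F r (c ^ 2 * d) = ∑ x ∈ univ.filter (· ≠ 0), lam F r (c * (x + d * x⁻¹)) := by
  rw [Kl, ← sum_filter_ne_zero_comp_mul _ hc]
  refine sum_congr rfl fun x hx => ?_
  have hx : x ≠ 0 := (mem_filter.mp hx).2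
  congr 1
  field_simp

theorem klm_two_eq_sum (a : F) :
    Klm F r 2 a = ∑ y ∈ univ.filter (· ≠ 0), ∑ x ∈ univ.filter (· ≠ 0),
      lam F r (x + y + a * (x * y)⁻¹) := by
  rw [Klm, ← sum_product_right']
  refine sum_equiv (piFinTwoEquiv fun _ => F) (by simp [Fin.forall_fin_two]) fun v _ => ?_
  simp [Fin.sum_univ_two, Fin.prod_univ_two]

theorem klm_two_eq (hF : Fintype.card F = 2 ^ r) (a : F) :
    Klm F r 2 a = ∑ s ∈ univ.filter (· ≠ 0), lam F r s⁻¹ * Kl F r (a * s) := by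
  rw [klm_two_eq_sum]
  refine sum_equiv (Equiv.inv F) (by simp) fun y hy => ?_
  have hy : y ≠ 0 := (mem_filter.mp hy).2
  rw [Equiv.inv_apply, inv_inv, Kl, mul_sum]
  refine sum_congr rfl fun x hx => ?_
  have hx : x ≠ 0 := (mem_filter.mp hx).2
  rw [← lam_add hF]
  congr 1
  field_simp
  ring

theorem sum_kl_mul (hF : Fintype.card F = 2 ^ r) {a : F} (ha : a ≠ 0) :
    ∑ s ∈ univ.filter (· ≠ 0), Kl F r (a * s) = 1 := by
  simp only [Kl]
  rw [sum_comm]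
  have hinner : ∀ x ∈ univ.filter (· ≠ (0 : F)),
      ∑ s ∈ univ.filter (· ≠ 0), lam F r (x + a * s * x⁻¹) = -lam F r x := by
    intro x hx
    have hx : x ≠ 0 := (mem_filter.mp hx).2
    calc ∑ s ∈ univ.filter (· ≠ 0), lam F r (x + a * s * x⁻¹)
        = ∑ s ∈ univ.filter (· ≠ 0), lam F r x * lam F r (a * x⁻¹ * s) :=
          sum_congr rfl fun s _ => by rw [← lam_add hF]; congr 1; ring
      _ = -lam F r x := by
          rw [← mul_sum, sum_filter_ne_zero_lam_mul hF (mul_ne_zero ha (inv_ne_zero hx))]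
          ring
  rw [sum_congr rfl hinner, sum_neg_distrib, sum_filter_ne_zero_lam hF, neg_neg]

theorem kl_sq_eq (hF : Fintype.card F = 2 ^ r) (a : F) :
    Kl F r a ^ 2 =
      2 ^ r - 1 + ∑ y ∈ (univ.filter (· ≠ (0 : F))).erase 1, Kl F r (a * (y + y⁻¹)) := by
  have := charP_two_of_card_eq_two_pow hF
  have h2 : (2 : F) = 0 := CharTwo.two_eq_zero
  have hsubst : ∀ x ∈ univ.filter (· ≠ (0 : F)),
      ∑ y ∈ univ.filter (· ≠ 0), lam F r (x + a * x⁻¹) * lam F r (y + a * y⁻¹) =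
        ∑ y ∈ univ.filter (· ≠ 0), lam F r ((1 + y) * (x + a * y⁻¹ * x⁻¹)) := by
    intro x hx
    have hx : x ≠ 0 := (mem_filter.mp hx).2
    rw [← sum_filter_ne_zero_comp_mul _ hx]
    refine sum_congr rfl fun y hy => ?_
    have hy : y ≠ 0 := (mem_filter.mp hy).2
    rw [← lam_add hF]
    congr 1
    field_simp
    ring
  rw [sq, Kl, sum_mul_sum, sum_congr rfl hsubst, sum_comm,
    ← add_sum_erase _ _ (mem_filter.mpr ⟨mem_univ 1, one_ne_zero⟩)]
  congr 1
  · simp only [CharTwo.add_self_eq_zero, zero_mul, lam_zero]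
    rw [sum_filter_ne_zero_eq_sub]
    simp [hF]
  · refine sum_congr rfl fun y hy => ?_
    obtain ⟨hy1, hy0⟩ : y ≠ 1 ∧ y ≠ 0 := by simpa using hy
    have h1y : 1 + y ≠ 0 := fun h => hy1 (by linear_combination h - h2)
    have hchar : a * (y + y⁻¹) = (1 + y) ^ 2 * (a * y⁻¹) := by
      field_simp
      linear_combination -(y * a) * h2
    rw [hchar, kl_sq_mul_eq_sum h1y]

end

theorem stmt8_general (r : ℕ) (F : Type) [Field F] [Fintype F]
    (hF : Fintype.card F = 2 ^ r) (a : F) (ha : a ≠ 0) :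
    Klm F r 2 a = (Kl F r a) ^ 2 - (2 ^ r : ℤ) := by
  rw [kl_sq_eq hF, sum_comp_add_inv hF (fun s => Kl F r (a * s)), klm_two_eq hF]
  simp only [add_mul, one_mul, sum_add_distrib, sum_kl_mul hF ha]
  ring

theorem stmt8 (r : ℕ) (hr : 1 ≤ r) (F : Type) [Field F] [Fintype F] [DecidableEq F]
    (hF : Fintype.card F = 2 ^ r) (a : F) (ha : a ≠ 0) :
    Klm F r 2 a = (Kl F r a) ^ 2 - (2 ^ r : ℤ) :=
  stmt8_general r F hF a ha
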